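/- Let M be a monoid. (i) If M admits a robust semigroup Markov language over a finite alphabet A representing a semigroup generating set for M, then M admits a robust monoid Markov language over A. (ii) If M admits a robust semigroup Markov language over an alphabet of the form B ∪ {1}, where B represents a monoid generating set for M and the extra letter 1 satisfies φ(1) = 1_M, then M admits a robust monoid Markov language over B. -/

import Mathlib

open Function

/-- A language is regular if it is accepted by a deterministic finite automaton
with a finite state set. -/
def RegularLang {A : Type} (L : Language A) : Prop :=
  ∃ (Q : Type) (_ : Fintype Q) (M : DFA A Q), M.accepts = L

/-- The product of a nonempty word under the letter-assignment `φ`; the empty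
word is sent to `none`. This is the induced map `φ⁺` on nonempty words. -/
def prodPlus {A S : Type} [Semigroup S] (φ : A → S) : List A → Option S
  | [] => none
  | a :: w => some (w.foldl (fun s b => s * φ b) (φ a))

/-- The induced monoid homomorphism `φ*` from the free monoid of words. -/
def monProd {A M : Type} [Monoid M] (φ : A → M) (w : List A) : M :=
  (w.map φ).prod

/-- A semigroup Markov language for `S` over `A` (with respect to `φ`): a regular,
`+`-prefix-closed language of nonempty words mapping bijectively onto `S` under `φ⁺`. -/
structure IsSgMarkovLang {A S : Type} [Semigroup S] (φ : A → S) (L : Language A) : Prop where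
  regular : RegularLang L
  not_empty_mem : [] ∉ L
  plus_prefix_closed : ∀ u v : List A, u ≠ [] → v ≠ [] → u ++ v ∈ L → u ∈ L
  unique_rep : ∀ s : S, ∃! w : List A, w ∈ L ∧ prodPlus φ w = some s

/-- A robust semigroup Markov language: additionally every word of `L` has minimal
length among (nonempty) words representing the same element. -/
structure IsRobustSgMarkovLang {A S : Type} [Semigroup S] (φ : A → S) (L : Language A)
    extends IsSgMarkovLang φ L : Prop where
  min_length : ∀ w ∈ L, ∀ v : List A, prodPlus φ v = prodPlus φ w → w.length ≤ v.length

/-- A monoid Markov language for `M` over `A` (with respect to `φ`): a regular,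
prefix-closed language mapping bijectively onto `M` under `φ*`. -/
structure IsMonMarkovLang {A M : Type} [Monoid M] (φ : A → M) (L : Language A) : Prop where
  regular : RegularLang L
  prefix_closed : ∀ u v : List A, u ++ v ∈ L → u ∈ L
  unique_rep : ∀ m : M, ∃! w : List A, w ∈ L ∧ monProd φ w = m

/-- A robust monoid Markov language: additionally every word of `L` has minimal
length among words representing the same element. -/
structure IsRobustMonMarkovLang {A M : Type} [Monoid M] (φ : A → M) (L : Language A)
    extends IsMonMarkovLang φ L : Prop where
  min_length : ∀ w ∈ L, ∀ v : List A, monProd φ v = monProd φ w → w.length ≤ v.length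

/-- `S` is Markov as a semigroup. -/
def SgMarkov (S : Type) [Semigroup S] : Prop :=
  ∃ (A : Type) (_ : Fintype A) (φ : A → S),
    (∀ s : S, ∃ w : List A, prodPlus φ w = some s) ∧
    ∃ L : Language A, IsSgMarkovLang φ L

/-- `S` is robustly Markov (as a semigroup) with respect to some alphabet. -/
def SgRobustlyMarkov (S : Type) [Semigroup S] : Prop :=
  ∃ (A : Type) (_ : Fintype A) (φ : A → S),
    (∀ s : S, ∃ w : List A, prodPlus φ w = some s) ∧
    ∃ L : Language A, IsRobustSgMarkovLang φ L

/-- `S` is strongly Markov (as a semigroup). -/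
def SgStronglyMarkov (S : Type) [Semigroup S] : Prop :=
  ∀ (A : Type) [Fintype A] (φ : A → S),
    (∀ s : S, ∃ w : List A, prodPlus φ w = some s) →
    ∃ L : Language A, IsRobustSgMarkovLang φ L

/-- `M` is Markov as a monoid. -/
def MonMarkov (M : Type) [Monoid M] : Prop :=
  ∃ (A : Type) (_ : Fintype A) (φ : A → M),
    Surjective (monProd φ) ∧ ∃ L : Language A, IsMonMarkovLang φ L

/-- `M` is robustly Markov (as a monoid) with respect to some alphabet. -/
def MonRobustlyMarkov (M : Type) [Monoid M] : Prop :=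
  ∃ (A : Type) (_ : Fintype A) (φ : A → M),
    Surjective (monProd φ) ∧ ∃ L : Language A, IsRobustMonMarkovLang φ L

/-- `M` is strongly Markov (as a monoid). -/
def MonStronglyMarkov (M : Type) [Monoid M] : Prop :=
  ∀ (A : Type) [Fintype A] (φ : A → M),
    Surjective (monProd φ) →
    ∃ L : Language A, IsRobustMonMarkovLang φ L

/-!
Let `w₁` be the word of the semigroup Markov language `L` representing `1`. Replacing `w₁` by
the empty word gives the monoid Markov language. Prefix-closure survives because, by minimality
of lengths, no nonempty proper prefix of a word of `L` can represent `1`: the remaining suffix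
would be a shorter representative of the same element. For (ii), in a robust monoid Markov
language over `B ∪ {1}` the letter `1` never occurs (deleting it shortens a word without changing
its value), so the language already lives over `B`.
-/

namespace Language

variable {α β : Type*}

theorem leftQuotient_singleton_of_not_prefix {x w : List α} (h : ¬x <+: w) :
    leftQuotient {w} x = 0 := by
  ext y
  exact iff_of_false (fun hy => h ⟨y, hy⟩) id

theorem leftQuotient_singleton_append (x v : List α) : leftQuotient {x ++ v} x = {v} := by
  ext y
  exact List.append_right_inj x

theorem isRegular_singleton (w : List α) : ({w} : Language α).IsRegular := by
  refine .of_finite_range_leftQuotient <|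
    ((Set.finite_range fun n : Fin (w.length + 1) => ({w.drop n} : Language α)).insert 0).subset ?_
  rintro _ ⟨x, rfl⟩
  by_cases h : x <+: w
  · obtain ⟨v, rfl⟩ := h
    refine Or.inr ⟨⟨x.length, by simp⟩, ?_⟩
    simp [leftQuotient_singleton_append]
  · exact Or.inl (leftQuotient_singleton_of_not_prefix h)

theorem IsRegular.preimage_map {L : Language α} (h : L.IsRegular) (f : β → α) :
    Language.IsRegular (List.map f ⁻¹' L : Language β) := by
  obtain ⟨σ, _, M, rfl⟩ := h
  exact ⟨σ, inferInstance, M.comap f, M.accepts_comap f⟩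

end Language

section Words

variable {A B M : Type} [Monoid M] (φ : A → M)

@[simp]
theorem monProd_append (u v : List A) : monProd φ (u ++ v) = monProd φ u * monProd φ v := by
  simp [monProd]

@[simp]
theorem monProd_cons (a : A) (w : List A) : monProd φ (a :: w) = φ a * monProd φ w := by
  simp [monProd]

theorem monProd_map (f : B → A) (u : List B) : monProd φ (u.map f) = monProd (φ ∘ f) u := by
  simp [monProd]

theorem prodPlus_eq_some_monProd {w : List A} (hw : w ≠ []) :
    prodPlus φ w = some (monProd φ w) := by
  obtain ⟨a, w, rfl⟩ := List.exists_cons_of_ne_nil hw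
  simp [prodPlus, monProd, List.prod_eq_foldl, List.foldl_map]

end Words

section SgToMon

variable {A M : Type} [Monoid M]

/-- The paper's `(L ∖ {w₁}) ∪ {ε}`, where `w₁` is the word of `L` representing `1`. -/
def monLangOfSgLang (φ : A → M) (L : Language A) : Language A :=
  {w | w = [] ∨ w ∈ L ∧ monProd φ w ≠ 1}

namespace IsRobustSgMarkovLang

variable {φ : A → M} {L : Language A}

theorem ne_nil (hL : IsRobustSgMarkovLang φ L) {w : List A} (hw : w ∈ L) : w ≠ [] := by
  rintro rfl
  exact hL.not_empty_mem hw

theorem prodPlus_eq (hL : IsRobustSgMarkovLang φ L) {w : List A} (hw : w ∈ L) :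
    prodPlus φ w = some (monProd φ w) :=
  prodPlus_eq_some_monProd φ (hL.ne_nil hw)

theorem monProd_eq_of_prodPlus_eq (hL : IsRobustSgMarkovLang φ L) {w : List A} (hw : w ∈ L)
    {m : M} (h : prodPlus φ w = some m) : monProd φ w = m :=
  Option.some_injective _ ((hL.prodPlus_eq hw).symm.trans h)

theorem eq_of_monProd_eq (hL : IsRobustSgMarkovLang φ L) {v w : List A} (hv : v ∈ L)
    (hw : w ∈ L) (h : monProd φ v = monProd φ w) : v = w := by
  obtain ⟨u, -, hu⟩ := hL.unique_rep (monProd φ w)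
  exact (hu v ⟨hv, by rw [hL.prodPlus_eq hv, h]⟩).trans (hu w ⟨hw, hL.prodPlus_eq hw⟩).symm

theorem length_le (hL : IsRobustSgMarkovLang φ L) {w v : List A} (hw : w ∈ L) (hv : v ≠ [])
    (h : monProd φ v = monProd φ w) : w.length ≤ v.length :=
  hL.min_length w hw v (by rw [prodPlus_eq_some_monProd φ hv, hL.prodPlus_eq hw, h])

theorem monProd_ne_one_of_append_mem (hL : IsRobustSgMarkovLang φ L) {u v : List A}
    (hu : u ≠ []) (hv : v ≠ []) (huv : u ++ v ∈ L) : monProd φ u ≠ 1 := by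
  intro h1
  have := hL.length_le huv hv (by simp [h1])
  exact hu (by simpa using this)

theorem isRegular_monLangOfSgLang (hL : IsRobustSgMarkovLang φ L) :
    (monLangOfSgLang φ L).IsRegular := by
  obtain ⟨w₁, ⟨hw₁, hw₁1⟩, -⟩ := hL.unique_rep 1
  replace hw₁1 := hL.monProd_eq_of_prodPlus_eq hw₁ hw₁1
  have hK : monLangOfSgLang φ L = 1 + (L ⊓ ({w₁} : Language A)ᶜ) := by
    ext w
    refine or_congr Iff.rfl (and_congr_right fun hw => not_congr ⟨fun h => ?_, ?_⟩)
    · exact hL.eq_of_monProd_eq hw hw₁ (h.trans hw₁1.symm)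
    · rintro rfl
      exact hw₁1
  have hreg : L.IsRegular := hL.regular
  rw [hK]
  exact (Language.isRegular_singleton []).add
    (hreg.inf (Language.isRegular_singleton w₁).compl)

theorem monLangOfSgLang_prefix_closed (hL : IsRobustSgMarkovLang φ L) (u v : List A)
    (huv : u ++ v ∈ monLangOfSgLang φ L) : u ∈ monLangOfSgLang φ L := by
  rcases huv with huv | ⟨huv, h1⟩
  · exact Or.inl (List.append_eq_nil_iff.mp huv).1
  by_cases hu : u = []
  · exact Or.inl hu
  by_cases hv : v = []
  · subst hv
    exact Or.inr ⟨by simpa using huv, by simpa using h1⟩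
  exact Or.inr ⟨hL.plus_prefix_closed u v hu hv huv, hL.monProd_ne_one_of_append_mem hu hv huv⟩

theorem monLangOfSgLang_unique_rep (hL : IsRobustSgMarkovLang φ L) (m : M) :
    ∃! w : List A, w ∈ monLangOfSgLang φ L ∧ monProd φ w = m := by
  by_cases hm : m = 1
  · subst hm
    refine ⟨[], ⟨Or.inl rfl, rfl⟩, ?_⟩
    rintro w ⟨hw | ⟨-, hw1⟩, h1⟩
    exacts [hw, absurd h1 hw1]
  obtain ⟨w, ⟨hw, hwm⟩, -⟩ := hL.unique_rep m
  replace hwm := hL.monProd_eq_of_prodPlus_eq hw hwm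
  refine ⟨w, ⟨Or.inr ⟨hw, hwm ▸ hm⟩, hwm⟩, ?_⟩
  rintro v ⟨hv | ⟨hv, -⟩, hvm⟩
  · subst hv
    exact absurd hvm.symm hm
  · exact hL.eq_of_monProd_eq hv hw (hvm.trans hwm.symm)

theorem monLangOfSgLang_min_length (hL : IsRobustSgMarkovLang φ L) (w : List A)
    (hw : w ∈ monLangOfSgLang φ L) (v : List A) (h : monProd φ v = monProd φ w) :
    w.length ≤ v.length := by
  rcases hw with rfl | ⟨hw, hw1⟩
  · exact Nat.zero_le _
  refine hL.length_le hw ?_ h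
  rintro rfl
  exact hw1 h.symm

theorem isRobustMonMarkovLang_monLangOfSgLang (hL : IsRobustSgMarkovLang φ L) :
    IsRobustMonMarkovLang φ (monLangOfSgLang φ L) where
  regular := hL.isRegular_monLangOfSgLang
  prefix_closed := hL.monLangOfSgLang_prefix_closed
  unique_rep := hL.monLangOfSgLang_unique_rep
  min_length := hL.monLangOfSgLang_min_length

end IsRobustSgMarkovLang

end SgToMon

namespace IsRobustMonMarkovLang

variable {A B M : Type} [Monoid M] {φ : A → M} {K : Language A}

theorem not_mem_of_eq_one (hK : IsRobustMonMarkovLang φ K) {a : A} (ha : φ a = 1)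
    {w : List A} (hw : w ∈ K) : a ∉ w := by
  intro haw
  obtain ⟨s, t, rfl⟩ := List.append_of_mem haw
  have := hK.min_length _ hw (s ++ t) (by simp [ha])
  simp at this

theorem preimage_map (hK : IsRobustMonMarkovLang φ K) {f : B → A} (hf : Injective f)
    (hrange : ∀ w ∈ K, ∀ a ∈ w, a ∈ Set.range f) :
    IsRobustMonMarkovLang (φ ∘ f) (List.map f ⁻¹' K) where
  regular := Language.IsRegular.preimage_map hK.regular f
  prefix_closed u v huv := hK.prefix_closed _ (v.map f) (by rw [← List.map_append]; exact huv)
  unique_rep m := by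
    obtain ⟨w, ⟨hw, hwm⟩, huniq⟩ := hK.unique_rep m
    obtain ⟨u, rfl⟩ : w ∈ Set.range (List.map f) := by
      rw [Set.range_list_map]
      exact hrange w hw
    refine ⟨u, ⟨hw, by rwa [← monProd_map]⟩, fun v ⟨hv, hvm⟩ => ?_⟩
    exact List.map_injective_iff.mpr hf (huniq _ ⟨hv, by rwa [monProd_map]⟩)
  min_length w hw v h := by
    simpa using hK.min_length _ hw (v.map f) (by simpa [monProd_map] using h)

end IsRobustMonMarkovLang

/-- (i) A robust semigroup Markov language over an alphabet representing a semigroup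
generating set yields a robust monoid Markov language over the same alphabet.
(ii) A robust semigroup Markov language over `B ∪ {1}`, where `B` represents a monoid
generating set and the extra letter represents the identity, yields a robust monoid
Markov language over `B`. -/
theorem stmt4 {M : Type} [Monoid M] :
    (∀ (A : Type) [Fintype A] (φ : A → M),
      (∀ m : M, ∃ w : List A, prodPlus φ w = some m) →
      (∃ L : Language A, IsRobustSgMarkovLang φ L) →
      ∃ K : Language A, IsRobustMonMarkovLang φ K) ∧
    (∀ (B : Type) [Fintype B] (φ : B → M),
      Surjective (monProd φ) →
      (∃ L : Language (Option B),
        IsRobustSgMarkovLang (fun x : Option B => Option.elim x 1 φ) L) →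
      ∃ K : Language B, IsRobustMonMarkovLang φ K) := by
  refine ⟨fun A _ φ _ ⟨L, hL⟩ => ⟨_, hL.isRobustMonMarkovLang_monLangOfSgLang⟩, ?_⟩
  rintro B _ φ - ⟨L, hL⟩
  have hK := hL.isRobustMonMarkovLang_monLangOfSgLang
  refine ⟨_, hK.preimage_map (Option.some_injective B) fun w hw a ha => ?_⟩
  exact Option.ne_none_iff_exists.mp (ne_of_mem_of_not_mem ha (hK.not_mem_of_eq_one rfl hw))
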